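/- arXiv:2511.07853 — 7 statements merged into one kernel-verified Lean document; each statement's English description precedes it below -/
import Mathlib

section
/- Let d ≥ 1 be an integer, let Δ ∈ (0,1), and let ε > 0. Let h be a real polynomial of degree at most d, and suppose that |h(x_j)| ≤ ε for all of the d+1 equally spaced points x_j = -Δ + (2j/d)Δ, j = 0, 1, …, d. Then |h(1)| < ε · exp(d(1 + log(1/Δ))) / √(2πd). -/
/-!
Write `x_k` for the nodes, `r = 2Δ/d` for their spacing and `ℓ_j` for the Lagrange basis.
Interpolation gives `|h(1)| ≤ ε ∑_j |ℓ_j(1)|` with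
`|ℓ_j(1)| = C(d,j) ∏_{k ≠ j} (1 - x_k) / (r^d d!)`. Since `x_{d-k} = -x_k`, the full product
`P = ∏_k (1 - x_k)` satisfies `P² = ∏_k (1 - x_k²) ≤ (1 - x_j²)²`, so the products for `j` and
`d - j`, which are `P/(1 - x_j)` and `P/(1 + x_j)`, add up to at most `2`. Hence
`∑_j |ℓ_j(1)| ≤ 2^d / (r^d d!) = (d/Δ)^d / d!`, and the strict Stirling bound
`√(2πd) (d/e)^d < d!` finishes.
-/

open Finset Polynomial Real
open scoped Nat

namespace Stirling

theorem sqrt_pi_lt_stirlingSeq {n : ℕ} (hn : n ≠ 0) : √π < stirlingSeq n := by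
  obtain ⟨m, rfl⟩ := Nat.exists_eq_succ_of_ne_zero hn
  have hlog : log (stirlingSeq (m + 2)) < log (stirlingSeq (m + 1)) := by
    have hsum := log_stirlingSeq_sdiff_hasSum m
    have := lt_of_lt_of_le (by positivity) (le_hasSum hsum 0 fun _ _ => by positivity)
    linarith
  exact (sqrt_pi_le_stirlingSeq (m + 1).succ_ne_zero).trans_lt
    ((log_lt_log_iff (stirlingSeq'_pos (m + 1)) (stirlingSeq'_pos m)).1 hlog)

theorem lt_factorial_stirling {n : ℕ} (hn : n ≠ 0) : √(2 * π * n) * (n / exp 1) ^ n < n ! := by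
  have : √(2 * π * n) * (n / exp 1) ^ n = √π * (√(2 * n) * (n / exp 1) ^ n) := by
    simp [sqrt_mul']; ring
  rw [this, ← lt_div_iff₀ (by positivity)]
  exact sqrt_pi_lt_stirlingSeq hn

end Stirling

theorem prod_erase_range_abs_natCast_sub {R : Type*} [CommRing R] [LinearOrder R]
    [IsStrictOrderedRing R] {d j : ℕ} (hj : j ≤ d) :
    ∏ k ∈ (range (d + 1)).erase j, |(j : R) - k| = j ! * (d - j)! := by
  have hsplit : (range (d + 1)).erase j = range j ∪ Ico (j + 1) (d + 1) := by
    ext; simp only [mem_erase, mem_range, mem_union, mem_Ico]; omega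
  rw [hsplit, prod_union (disjoint_left.2 fun k hk hk' => by simp at hk hk'; omega)]
  congr 1
  · rw [← prod_range_reflect, ← prod_range_add_one_eq_factorial]
    push_cast
    refine prod_congr rfl fun k hk => ?_
    rw [Nat.cast_sub (by simp at hk; omega), Nat.cast_sub (by simp at hk; omega),
      abs_of_nonneg (by push_cast; linarith)]
    push_cast; ring
  · rw [prod_Ico_eq_prod_range, show d + 1 - (j + 1) = d - j by omega,
      ← prod_range_add_one_eq_factorial]
    push_cast
    refine prod_congr rfl fun k _ => ?_
    rw [abs_sub_comm, abs_of_nonneg (by linarith)]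
    ring

namespace Lagrange

variable {F : Type*} [Field F] {ι : Type*} [DecidableEq ι]

theorem eval_basis (s : Finset ι) (v : ι → F) (i : ι) (t : F) :
    (Lagrange.basis s v i).eval t = ∏ j ∈ s.erase i, (t - v j) / (v i - v j) := by
  simp only [Lagrange.basis, basisDivisor, eval_prod, eval_mul, eval_C, eval_sub, eval_X]
  exact prod_congr rfl fun _ _ => inv_mul_eq_div _ _

variable [LinearOrder F] [IsStrictOrderedRing F]

theorem abs_eval_le_sum {s : Finset ι} {v : ι → F} (hvs : Set.InjOn v s) {f : F[X]}
    (hf : f.degree < #s) (t : F) :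
    |f.eval t| ≤ ∑ i ∈ s, |f.eval (v i)| * |(Lagrange.basis s v i).eval t| := by
  conv_lhs => rw [eq_interpolate hvs hf, interpolate_apply, eval_finsetSum]
  refine (abs_sum_le_sum_abs _ _).trans_eq (sum_congr rfl fun i _ => ?_)
  rw [eval_mul, eval_C, abs_mul]

theorem abs_eval_basis_range_arithmetic (a r t : F) {d j : ℕ} (hj : j ≤ d) :
    |(Lagrange.basis (range (d + 1)) (fun k : ℕ => a + k * r) j).eval t|
      = (∏ k ∈ (range (d + 1)).erase j, |t - (a + k * r)|) / (|r| ^ d * (j ! * (d - j)!)) := by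
  have hcard : #((range (d + 1)).erase j) = d := by
    rw [card_erase_of_mem (mem_range.2 (by omega)), card_range, Nat.add_sub_cancel]
  simp_rw [Lagrange.eval_basis, abs_prod, abs_div, prod_div_distrib, add_sub_add_left_eq_sub,
    ← sub_mul, abs_mul, prod_mul_distrib, prod_const, hcard, prod_erase_range_abs_natCast_sub hj,
    mul_comm]

end Lagrange

section SymmetricNodes

variable {R : Type*} [CommRing R] {x : ℕ → R} {d : ℕ}

theorem sq_prod_range_one_sub_eq_prod_one_sub_sq (hx : ∀ k ≤ d, x (d - k) = -x k) :
    (∏ k ∈ range (d + 1), (1 - x k)) ^ 2 = ∏ k ∈ range (d + 1), (1 - x k ^ 2) := by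
  have hreflect : ∏ k ∈ range (d + 1), (1 - x k) = ∏ k ∈ range (d + 1), (1 + x k) := by
    rw [← prod_range_reflect]
    refine prod_congr rfl fun k hk => ?_
    rw [Nat.add_sub_cancel, hx k (by simp at hk; omega), sub_neg_eq_add]
  rw [sq]
  nth_rewrite 2 [hreflect]
  rw [← prod_mul_distrib]
  exact prod_congr rfl fun _ _ => by ring

variable [LinearOrder R] [IsStrictOrderedRing R]

theorem prod_range_one_sub_le_one_sub_sq (hx : ∀ k ≤ d, x (d - k) = -x k)
    (hx1 : ∀ k ≤ d, |x k| ≤ 1) {j : ℕ} (hj : j ≤ d) :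
    ∏ k ∈ range (d + 1), (1 - x k) ≤ 1 - x j ^ 2 := by
  have hsq_le : ∀ k ∈ range (d + 1), x k ^ 2 ≤ 1 := fun k hk =>
    sq_le_one_iff_abs_le_one _ |>.2 (hx1 k (by simp at hk; omega))
  have hpair : ∏ k ∈ {j, d - j}, (1 - x k ^ 2) ≤ (1 - x j ^ 2) ^ 2 := by
    by_cases hmid : d - j = j
    · have hxj : x j = 0 := by have := hx j hj; rw [hmid] at this; linarith
      simp [hmid, hxj]
    · rw [prod_pair (Ne.symm hmid), hx j hj, neg_sq, ← sq]
  refine (pow_le_pow_iff_left₀ ?_ (by linarith [hsq_le j (by simp; omega)]) two_ne_zero).1 ?_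
  · exact prod_nonneg fun k hk => by linarith [(abs_le.1 (hx1 k (by simp at hk; omega))).2]
  rw [sq_prod_range_one_sub_eq_prod_one_sub_sq hx]
  refine le_trans (prod_le_prod_of_subset_of_le_one ?_ ?_ ?_) hpair
  · intro k hk; simp at hk ⊢; omega
  · exact fun k hk => sub_nonneg.2 (hsq_le k hk)
  · exact fun k _ _ => by nlinarith [sq_nonneg (x k)]

theorem prod_erase_one_sub_add_le_two (hx : ∀ k ≤ d, x (d - k) = -x k)
    (hx1 : ∀ k ≤ d, |x k| < 1) {j : ℕ} (hj : j ≤ d) :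
    ∏ k ∈ (range (d + 1)).erase j, (1 - x k) + ∏ k ∈ (range (d + 1)).erase (d - j), (1 - x k)
      ≤ 2 := by
  have hP := prod_range_one_sub_le_one_sub_sq hx (fun k hk => (hx1 k hk).le) hj
  have hj' := mul_prod_erase (range (d + 1)) (fun k => 1 - x k)
    (mem_range.2 (by omega : j < d + 1))
  have hdj' := mul_prod_erase (range (d + 1)) (fun k => 1 - x k)
    (mem_range.2 (by omega : d - j < d + 1))
  rw [hx j hj, sub_neg_eq_add] at hdj'
  have hxj : x j ^ 2 < 1 := (sq_lt_one_iff_abs_lt_one _).2 (hx1 j hj)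
  refine le_of_mul_le_mul_right ?_ (sub_pos.2 hxj)
  linear_combination (1 + x j) * hj' + (1 - x j) * hdj' + 2 * hP

theorem sum_choose_mul_prod_erase_one_sub_le_two_pow (hx : ∀ k ≤ d, x (d - k) = -x k)
    (hx1 : ∀ k ≤ d, |x k| < 1) :
    ∑ j ∈ range (d + 1), (d.choose j : R) * ∏ k ∈ (range (d + 1)).erase j, (1 - x k)
      ≤ 2 ^ d := by
  set b : ℕ → R := fun j => ∏ k ∈ (range (d + 1)).erase j, (1 - x k)
  have hreflect : ∑ j ∈ range (d + 1), (d.choose j : R) * b j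
      = ∑ j ∈ range (d + 1), (d.choose j : R) * b (d - j) := by
    rw [← sum_range_reflect]
    refine sum_congr rfl fun j hj => ?_
    rw [Nat.add_sub_cancel, Nat.choose_symm (by simp at hj; omega)]
  have hsum : ∑ j ∈ range (d + 1), (d.choose j : R) * (b j + b (d - j)) ≤ 2 * 2 ^ d := by
    calc ∑ j ∈ range (d + 1), (d.choose j : R) * (b j + b (d - j))
        ≤ ∑ j ∈ range (d + 1), (d.choose j : R) * 2 := by
          gcongr with j hj
          exact prod_erase_one_sub_add_le_two hx hx1 (by simp at hj; omega)
      _ = 2 * 2 ^ d := by rw [← sum_mul, ← Nat.cast_sum, Nat.sum_range_choose]; push_cast; ring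
  simp only [mul_add, sum_add_distrib, ← hreflect] at hsum
  linarith

end SymmetricNodes

theorem sum_abs_eval_one_basis_equispaced_le {d : ℕ} (hd : d ≠ 0) {Δ : ℝ} (hΔ0 : 0 < Δ)
    (hΔ1 : Δ < 1) :
    ∑ j ∈ range (d + 1),
        |(Lagrange.basis (range (d + 1)) (fun k : ℕ => -Δ + 2 * (k : ℝ) / d * Δ) j).eval 1|
      ≤ (d / Δ) ^ d / d ! := by
  have hd0 : (0 : ℝ) < d := by positivity
  set r : ℝ := 2 * Δ / d with hr
  have hr0 : 0 < r := by positivity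
  set x : ℕ → ℝ := fun k => -Δ + k * r with hx_def
  have hnodes : (fun k : ℕ => -Δ + 2 * (k : ℝ) / d * Δ) = x := by
    funext k; simp only [x, r]; ring
  have hx : ∀ k ≤ d, x (d - k) = -x k := by
    intro k hk; simp only [x, r]; rw [Nat.cast_sub hk]; field_simp; ring
  have hx1 : ∀ k ≤ d, |x k| < 1 := by
    intro k hk
    have hk' : (k : ℝ) * r ≤ 2 * Δ := by
      calc (k : ℝ) * r ≤ d * r := by gcongr
        _ = 2 * Δ := by rw [hr]; field_simp
    exact abs_lt.2 ⟨by simp only [x]; nlinarith, by simp only [x]; linarith⟩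
  have hterm : ∀ j ∈ range (d + 1),
      |(Lagrange.basis (range (d + 1)) x j).eval 1|
        = (d.choose j : ℝ) * (∏ k ∈ (range (d + 1)).erase j, (1 - x k)) / (r ^ d * d !) := by
    intro j hj
    have hjd : j ≤ d := by simp at hj; omega
    rw [hx_def, Lagrange.abs_eval_basis_range_arithmetic _ _ _ hjd, Nat.cast_choose ℝ hjd]
    have habs : ∏ k ∈ (range (d + 1)).erase j, |1 - (-Δ + k * r)|
        = ∏ k ∈ (range (d + 1)).erase j, (1 - (-Δ + k * r)) := by
      refine prod_congr rfl fun k hk => abs_of_pos ?_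
      have := (abs_lt.1 (hx1 k (by simp at hk; omega))).2
      simp only [x] at this
      linarith
    rw [habs, abs_of_pos hr0]
    generalize ∏ k ∈ (range (d + 1)).erase j, (1 - (-Δ + k * r)) = P
    field_simp
  rw [hnodes]
  calc _ = (∑ j ∈ range (d + 1), (d.choose j : ℝ) * ∏ k ∈ (range (d + 1)).erase j, (1 - x k))
        / (r ^ d * d !) := by rw [sum_div]; exact sum_congr rfl hterm
    _ ≤ 2 ^ d / (r ^ d * d !) := by
        gcongr; exact sum_choose_mul_prod_erase_one_sub_le_two_pow hx hx1
    _ = (d / Δ) ^ d / d ! := by rw [hr, div_pow, div_pow, mul_pow]; field_simp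

theorem div_pow_div_factorial_lt_exp_div_sqrt {n : ℕ} (hn : n ≠ 0) {Δ : ℝ} (hΔ : 0 < Δ) :
    (n / Δ) ^ n / n ! < exp (n * (1 + log (1 / Δ))) / √(2 * π * n) := by
  have hexp : exp (n * (1 + log (1 / Δ))) = (n / Δ) ^ n / (n / exp 1) ^ n := by
    rw [exp_nat_mul, exp_add, exp_log (by positivity), ← div_pow]
    congr 1
    field_simp
  rw [hexp, div_div, div_lt_div_iff_of_pos_left (by positivity) (by positivity) (by positivity),
    mul_comm]
  exact Stirling.lt_factorial_stirling hn

/-- Lagrange-interpolation error bound (Kondo et al.): if a real polynomial `h` of degree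
at most `d` satisfies `|h(x_j)| ≤ ε` at the `d+1` equally spaced points
`x_j = -Δ + (2j/d)Δ`, `j = 0, …, d`, with `Δ ∈ (0,1)`, then
`|h(1)| < ε · exp(d(1 + log(1/Δ))) / √(2πd)`. -/
theorem lagrange_interpolation_error_bound
    (d : ℕ) (hd : 1 ≤ d) (Δ ε : ℝ) (hΔ : Δ ∈ Set.Ioo (0 : ℝ) 1) (hε : 0 < ε)
    (h : Polynomial ℝ) (hdeg : h.natDegree ≤ d)
    (hpts : ∀ j : ℕ, j ≤ d → |h.eval (-Δ + 2 * (j : ℝ) / d * Δ)| ≤ ε) :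
    |h.eval 1| < ε * Real.exp (d * (1 + Real.log (1 / Δ))) / Real.sqrt (2 * Real.pi * d) := by
  obtain ⟨hΔ0, hΔ1⟩ := hΔ
  have hd0 : d ≠ 0 := by omega
  have hinj : Set.InjOn (fun k : ℕ => -Δ + 2 * (k : ℝ) / d * Δ) (range (d + 1)) := by
    intro a _ b _ hab
    have : (a : ℝ) = b := by simpa [hΔ0.ne', hd0] using hab
    exact_mod_cast this
  have hdeg' : h.degree < #(range (d + 1)) := by
    rw [card_range]
    exact (degree_le_of_natDegree_le hdeg).trans_lt (by exact_mod_cast d.lt_succ_self)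
  calc |h.eval 1|
      ≤ ∑ j ∈ range (d + 1), |h.eval (-Δ + 2 * (j : ℝ) / d * Δ)| *
          |(Lagrange.basis (range (d + 1)) (fun k : ℕ => -Δ + 2 * (k : ℝ) / d * Δ) j).eval 1| :=
        Lagrange.abs_eval_le_sum hinj hdeg' 1
    _ ≤ ε * ∑ j ∈ range (d + 1),
          |(Lagrange.basis (range (d + 1)) (fun k : ℕ => -Δ + 2 * (k : ℝ) / d * Δ) j).eval 1| := by
        rw [mul_sum]
        gcongr with j hj
        exact hpts j (by simp at hj; omega)
    _ ≤ ε * ((d / Δ) ^ d / d !) := by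
        gcongr; exact sum_abs_eval_one_basis_equispaced_le hd0 hΔ0 hΔ1
    _ < ε * (exp (d * (1 + log (1 / Δ))) / √(2 * π * d)) :=
        mul_lt_mul_of_pos_left (div_pow_div_factorial_lt_exp_div_sqrt hd0 hΔ0) hε
    _ = _ := (mul_div_assoc _ _ _).symm
end

section
/- Let M and N be positive even integers and let n be a natural number. Then (M+N+2n−2)!! · (N+2n−1)!! ≥ Mⁿ · Nⁿ · (M+N−2)!! · (N−1)!!. -/
/-- Term-by-term lower bound on the hypergeometric coefficients: for even positive `M`, `N`
and any `n`, `(M+N+2n−2)!! · (N+2n−1)!! ≥ Mⁿ · Nⁿ · (M+N−2)!! · (N−1)!!`. -/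
theorem doubleFactorial_ratio_lower_bound (M N : ℕ) (hM : 0 < M) (hMe : Even M)
    (hN : 0 < N) (hNe : Even N) (n : ℕ) :
    M ^ n * N ^ n * Nat.doubleFactorial (M + N - 2) * Nat.doubleFactorial (N - 1) ≤
      Nat.doubleFactorial (M + N + 2 * n - 2) * Nat.doubleFactorial (N + 2 * n - 1) := by
  have hM2 : 2 ≤ M := Nat.le_of_dvd hM hMe.two_dvd
  have hN2 : 2 ≤ N := Nat.le_of_dvd hN hNe.two_dvd
  induction n with
  | zero => simp
  | succ n ih =>
    have e1 : M + N + 2 * (n + 1) - 2 = (M + N + 2 * n - 2) + 2 := by omega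
    have e2 : N + 2 * (n + 1) - 1 = (N + 2 * n - 1) + 2 := by omega
    rw [e1, e2, Nat.doubleFactorial_add_two, Nat.doubleFactorial_add_two]
    calc M ^ (n+1) * N ^ (n+1) * Nat.doubleFactorial (M + N - 2) * Nat.doubleFactorial (N - 1)
        = (M * N) * (M ^ n * N ^ n * Nat.doubleFactorial (M + N - 2) *
            Nat.doubleFactorial (N - 1)) := by ring
      _ ≤ ((M + N + 2 * n - 2 + 2) * (N + 2 * n - 1 + 2)) *
            (Nat.doubleFactorial (M + N + 2 * n - 2) * Nat.doubleFactorial (N + 2 * n - 1)) := by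
          apply Nat.mul_le_mul
          · apply Nat.mul_le_mul <;> omega
          · exact ih
      _ = (M + N + 2 * n - 2 + 2) * Nat.doubleFactorial (M + N + 2 * n - 2) *
            ((N + 2 * n - 1 + 2) * Nat.doubleFactorial (N + 2 * n - 1)) := by ring
end

section
/- Let M and N be positive even integers and let t be a real number with 0 ≤ t < 1. Then the series Σ_{n=0}^{∞} a_n tⁿ with a_n = [((M+N)/2)_n · ((N+1)/2)_n] / [(1/2)_n · n!] is summable, and its sum satisfies Σ_{n=0}^{∞} a_n tⁿ ≥ cosh(√(M·N·t)). -/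
open Polynomial

open Filter

-- helper: (c+n)/(n+d) → 1 for d > 0
lemma aux_tendsto_ratio (c d : ℝ) (hd : 0 < d) :
    Tendsto (fun n : ℕ => (c + n) / ((n : ℝ) + d)) atTop (nhds 1) := by
  have h0 : Tendsto (fun n : ℕ => (c - d) / ((n : ℝ) + d)) atTop (nhds 0) :=
    Tendsto.div_atTop tendsto_const_nhds
      (tendsto_atTop_add_const_right _ d tendsto_natCast_atTop_atTop)
  have := h0.const_add 1
  rw [add_zero] at this
  refine this.congr fun n => ?_
  have hne : (n : ℝ) + d ≠ 0 := by positivity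
  field_simp
  ring

lemma aux_half_poch (n : ℕ) :
    (ascPochhammer ℝ n).eval (1 / 2) * (n.factorial : ℝ) * 4 ^ n = ((2 * n).factorial : ℝ) := by
  induction n with
  | zero => simp
  | succ n ih =>
    have h2 : 2 * (n + 1) = (2 * n + 1) + 1 := by ring
    calc (ascPochhammer ℝ (n+1)).eval (1/2) * ((n+1).factorial : ℝ) * 4 ^ (n+1)
        = ((ascPochhammer ℝ n).eval (1/2) * (n.factorial : ℝ) * 4 ^ n) *
          ((1/2 + n) * ((n : ℝ) + 1) * 4) := by
          rw [ascPochhammer_succ_eval, Nat.factorial_succ]; push_cast; ring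
      _ = ((2*n).factorial : ℝ) * ((1/2 + n) * ((n : ℝ) + 1) * 4) := by rw [ih]
      _ = (((2 * (n+1)).factorial : ℕ) : ℝ) := by
          rw [h2, Nat.factorial_succ, Nat.factorial_succ]; push_cast; ring

/-- The Gauss hypergeometric series `₂F₁((M+N)/2, (N+1)/2; 1/2; t)` is summable for
`0 ≤ t < 1` and is bounded below by `cosh(√(MNt))`. -/
theorem hypergeometric_summable_and_cosh_lower_bound (M N : ℕ) (hM : 0 < M) (hMe : Even M)
    (hN : 0 < N) (hNe : Even N) (t : ℝ) (ht0 : 0 ≤ t) (ht1 : t < 1) :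
    Summable (fun n : ℕ =>
      (ascPochhammer ℝ n).eval (((M : ℝ) + N) / 2) *
          (ascPochhammer ℝ n).eval (((N : ℝ) + 1) / 2) /
        ((ascPochhammer ℝ n).eval (1 / 2) * (n.factorial : ℝ)) * t ^ n) ∧
    Real.cosh (Real.sqrt ((M : ℝ) * N * t)) ≤
      ∑' n : ℕ,
        (ascPochhammer ℝ n).eval (((M : ℝ) + N) / 2) *
            (ascPochhammer ℝ n).eval (((N : ℝ) + 1) / 2) /
          ((ascPochhammer ℝ n).eval (1 / 2) * (n.factorial : ℝ)) * t ^ n := by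
  set A : ℝ := (((M : ℝ) + N) / 2) with hA
  set B : ℝ := (((N : ℝ) + 1) / 2) with hB
  have hM1 : (1 : ℝ) ≤ (M : ℝ) := by exact_mod_cast hM
  have hN1 : (1 : ℝ) ≤ (N : ℝ) := by exact_mod_cast hN
  have hApos : 0 < A := by rw [hA]; positivity
  have hBpos : 0 < B := by rw [hB]; positivity
  set f : ℕ → ℝ := fun n =>
    (ascPochhammer ℝ n).eval A * (ascPochhammer ℝ n).eval B /
      ((ascPochhammer ℝ n).eval (1 / 2) * (n.factorial : ℝ)) * t ^ n with hf
  -- positivity facts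
  have hpA : ∀ n, 0 < (ascPochhammer ℝ n).eval A := fun n => ascPochhammer_pos n A hApos
  have hpB : ∀ n, 0 < (ascPochhammer ℝ n).eval B := fun n => ascPochhammer_pos n B hBpos
  have hpH : ∀ n, 0 < (ascPochhammer ℝ n).eval (1 / 2 : ℝ) :=
    fun n => ascPochhammer_pos n _ (by norm_num)
  -- key pointwise bound
  have hkey : ∀ n : ℕ, ((M : ℝ) * N * t) ^ n / ((2 * n).factorial : ℝ) ≤ f n := by
    intro n
    have hMN : ∀ n : ℕ, ((M : ℝ) * N) ^ n ≤
        (ascPochhammer ℝ n).eval A * (ascPochhammer ℝ n).eval B * 4 ^ n := by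
      intro n
      induction n with
      | zero => simp
      | succ n ih =>
        rw [ascPochhammer_succ_eval, ascPochhammer_succ_eval, pow_succ, pow_succ]
        have hstep : (M : ℝ) * N ≤ (A + n) * (B + n) * 4 := by
          have hn0 : (0 : ℝ) ≤ (n : ℝ) := Nat.cast_nonneg n
          rw [hA, hB]
          nlinarith
        have h1 := hpA n
        have h2 := hpB n
        calc ((M : ℝ) * N) ^ n * ((M : ℝ) * N)
            ≤ ((ascPochhammer ℝ n).eval A * (ascPochhammer ℝ n).eval B * 4 ^ n) *
              ((A + n) * (B + n) * 4) := by
              apply mul_le_mul ih hstep (by nlinarith) (by positivity)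
          _ = (ascPochhammer ℝ n).eval A * (A + n) * ((ascPochhammer ℝ n).eval B * (B + n)) *
              (4 ^ n * 4) := by ring
    have hfac : (ascPochhammer ℝ n).eval (1 / 2 : ℝ) * (n.factorial : ℝ) =
        ((2 * n).factorial : ℝ) / 4 ^ n := by
      rw [← aux_half_poch n]; field_simp
    rw [hf]
    simp only
    rw [hfac, div_div_eq_mul_div, mul_pow, div_mul_eq_mul_div]
    have h2n : (0:ℝ) < ((2*n).factorial : ℝ) := by exact_mod_cast (2*n).factorial_pos
    rw [div_le_div_iff_of_pos_right h2n]
    exact mul_le_mul_of_nonneg_right (hMN n) (pow_nonneg ht0 n)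
  -- summability
  have hfpos0 : f 0 = 1 := by simp [hf]
  have hsum : Summable f := by
    rcases eq_or_lt_of_le ht0 with ht | ht
    · apply summable_of_ne_finset_zero (s := {0})
      intro n hn
      simp only [Finset.mem_singleton] at hn
      simp [hf, ← ht, zero_pow hn]
    · have hfpos : ∀ n, 0 < f n := by
        intro n
        rw [hf]
        have := hpA n; have := hpB n; have := hpH n
        have : (0:ℝ) < (n.factorial : ℝ) := by exact_mod_cast n.factorial_pos
        positivity
      apply summable_of_ratio_test_tendsto_lt_one ht1
        (Eventually.of_forall fun n => (hfpos n).ne')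
      have hratio : ∀ n : ℕ, ‖f (n + 1)‖ / ‖f n‖ =
          ((A + n) / ((n : ℝ) + 1)) * ((B + n) / ((n : ℝ) + 1 / 2)) * t := by
        intro n
        rw [Real.norm_of_nonneg (hfpos _).le, Real.norm_of_nonneg (hfpos _).le, hf]
        simp only [ascPochhammer_succ_eval, Nat.factorial_succ, pow_succ]
        have h1 := (hpA n).ne'
        have h2 := (hpB n).ne'
        have h3 := (hpH n).ne'
        have h4 : ((n.factorial : ℝ)) ≠ 0 := by positivity
        have h5 : ((n : ℝ) + 1) ≠ 0 := by positivity
        have h6 : ((n : ℝ) + 1 / 2) ≠ 0 := by positivity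
        have h7 : t ^ n ≠ 0 := (pow_pos ht n).ne'
        have h8 : ((1:ℝ)/2 + n) = (n : ℝ) + 1/2 := by ring
        rw [h8]
        push_cast
        field_simp
      rw [show (nhds t) = nhds (1 * 1 * t) by rw [one_mul, one_mul]]
      exact (funext hratio : _) ▸
        (((aux_tendsto_ratio A 1 one_pos).mul
          (aux_tendsto_ratio B (1/2) (by norm_num))).mul_const t)
  refine ⟨hsum, ?_⟩
  -- cosh bound
  have hMNt : 0 ≤ (M : ℝ) * N * t := by positivity
  have hcosh : HasSum (fun n : ℕ => ((M : ℝ) * N * t) ^ n / ((2 * n).factorial : ℝ))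
      (Real.cosh (Real.sqrt ((M : ℝ) * N * t))) := by
    have h := Real.hasSum_cosh (Real.sqrt ((M : ℝ) * N * t))
    have he : (fun n : ℕ => Real.sqrt ((M:ℝ)*N*t) ^ (2*n) / (((2*n).factorial : ℕ) : ℝ)) =
        fun n : ℕ => ((M:ℝ)*N*t) ^ n / (((2*n).factorial : ℕ) : ℝ) := by
      funext n
      rw [pow_mul, Real.sq_sqrt hMNt]
    rwa [he] at h
  rw [← hcosh.tsum_eq]
  exact Summable.tsum_le_tsum hkey hcosh.summable hsum
end

section
/- Let N be a positive even integer and M an even integer with M ≥ 2. Then (N−1)!! · (M+N−2)!! = C(M/2 + N/2 − 1, N/2) · N! · (M−2)!!. -/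
/-- First-moment identity: for even `N ≥ 2` and even `M ≥ 2`,
`(N−1)!! · (M+N−2)!! = C(M/2 + N/2 − 1, N/2) · N! · (M−2)!!`. -/
theorem doubleFactorial_first_moment_identity (N M : ℕ) (hN : 0 < N) (hNe : Even N)
    (hM : 2 ≤ M) (hMe : Even M) :
    Nat.doubleFactorial (N - 1) * Nat.doubleFactorial (M + N - 2) =
      (M / 2 + N / 2 - 1).choose (N / 2) * N.factorial * Nat.doubleFactorial (M - 2) := by
  obtain ⟨n, rfl⟩ := hNe
  obtain ⟨m, rfl⟩ := hMe
  obtain ⟨a, rfl⟩ : ∃ a, n = a + 1 := ⟨n - 1, by omega⟩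
  obtain ⟨b, rfl⟩ : ∃ b, m = b + 1 := ⟨m - 1, by omega⟩
  have e1 : a + 1 + (a + 1) - 1 = 2 * a + 1 := by omega
  have e2 : b + 1 + (b + 1) + (a + 1 + (a + 1)) - 2 = 2 * (a + b + 1) := by omega
  have e3 : (b + 1 + (b + 1)) / 2 + (a + 1 + (a + 1)) / 2 - 1 = a + b + 1 := by omega
  have e4 : (a + 1 + (a + 1)) / 2 = a + 1 := by omega
  have e5 : b + 1 + (b + 1) - 2 = 2 * b := by omega
  have e6 : a + 1 + (a + 1) = 2 * (a + 1) := by omega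
  rw [e1, e2, e3, e4, e5, e6]
  apply Nat.eq_of_mul_eq_mul_left (show 0 < 2 ^ (a + 1) * (a + 1).factorial by positivity)
  have key : 2 ^ (a + 1) * (a + 1).factorial * Nat.doubleFactorial (2 * a + 1) =
      (2 * (a + 1)).factorial := by
    rw [← Nat.doubleFactorial_two_mul]
    have h : 2 * (a + 1) = (2 * a + 1) + 1 := by ring
    rw [h, Nat.factorial_eq_mul_doubleFactorial]
  have hc : (a + b + 1).choose (a + 1) * (a + 1).factorial * b.factorial =
      (a + b + 1).factorial := by
    have := Nat.choose_mul_factorial_mul_factorial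
      (show a + 1 ≤ a + b + 1 by omega) (n := a + b + 1)
    simpa [show a + b + 1 - (a + 1) = b by omega] using this
  calc 2 ^ (a + 1) * (a + 1).factorial *
        (Nat.doubleFactorial (2 * a + 1) * Nat.doubleFactorial (2 * (a + b + 1)))
      = (2 ^ (a + 1) * (a + 1).factorial * Nat.doubleFactorial (2 * a + 1)) *
        Nat.doubleFactorial (2 * (a + b + 1)) := by ring
    _ = (2 * (a + 1)).factorial * (2 ^ (a + b + 1) * (a + b + 1).factorial) := by
        rw [key, Nat.doubleFactorial_two_mul]
    _ = (2 * (a + 1)).factorial * (2 ^ (a + b + 1) *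
        ((a + b + 1).choose (a + 1) * (a + 1).factorial * b.factorial)) := by rw [hc]
    _ = 2 ^ (a + 1) * (a + 1).factorial *
        ((a + b + 1).choose (a + 1) * (2 * (a + 1)).factorial * (2 ^ b * b.factorial)) := by
        rw [pow_add]; ring
    _ = 2 ^ (a + 1) * (a + 1).factorial *
        ((a + b + 1).choose (a + 1) * (2 * (a + 1)).factorial *
          Nat.doubleFactorial (2 * b)) := by rw [Nat.doubleFactorial_two_mul]
end

section
/- For every real number w with 0 ≤ w < 1, one has 2w ≤ w/(1−w) − log(1−w) ≤ 2w + 3w²/(2(1−w)). -/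
namespace Real

theorem half_sub_inv_le_log {x : ℝ} (hx₀ : 0 < x) (hx₁ : x ≤ 1) : (x - x⁻¹) / 2 ≤ log x := by
  rw [← sinh_log hx₀]
  exact sinh_le_self_iff.2 (log_nonpos hx₀.le hx₁)

end Real

/-- Two-sided bound `2w ≤ w/(1−w) − log(1−w) ≤ 2w + 3w²/(2(1−w))` for `0 ≤ w < 1`. -/
theorem two_sided_log_bound (w : ℝ) (h0 : 0 ≤ w) (h1 : w < 1) :
    2 * w ≤ w / (1 - w) - Real.log (1 - w) ∧
      w / (1 - w) - Real.log (1 - w) ≤ 2 * w + 3 * w ^ 2 / (2 * (1 - w)) := by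
  have hpos : 0 < 1 - w := by linarith
  constructor
  · have hlog := Real.log_le_sub_one_of_pos hpos
    have hdiv : w ≤ w / (1 - w) := le_div_self h0 hpos (by linarith)
    linarith
  · have hlog := Real.half_sub_inv_le_log hpos (by linarith)
    have hrewrite : w / (1 - w) - ((1 - w) - (1 - w)⁻¹) / 2
        = 2 * w + 3 * w ^ 2 / (2 * (1 - w)) := by
      field_simp
      ring
    linarith
end

section
/- Let M and N be positive even integers and let n be a natural number. Then (M+N+2n−2)!! · (N+2n−1)!! · (N/2)! · ((M+N)/2)! ≤ 2^{2n} · (N/2 + n)! · ((M+N)/2 + n)! · (M+N−2)!! · (N−1)!!. -/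
private lemma df_aux (a b n : ℕ) :
    Nat.doubleFactorial (2*(a+b+n+1)) * Nat.doubleFactorial (2*(b+n)+1) *
        (b+1).factorial * (a+b+2).factorial ≤
      2 ^ (2*n) * (b+1+n).factorial * (a+b+2+n).factorial *
        Nat.doubleFactorial (2*(a+b+1)) * Nat.doubleFactorial (2*b+1) := by
  induction n with
  | zero => exact le_of_eq (by ring_nf)
  | succ n ih =>
    have h1 : 2*(a+b+(n+1)+1) = 2*(a+b+n+1) + 2 := by ring
    have h2 : 2*(b+(n+1))+1 = (2*(b+n)+1) + 2 := by ring
    have h3 : b+1+(n+1) = (b+1+n)+1 := by ring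
    have h4 : a+b+2+(n+1) = (a+b+2+n)+1 := by ring
    have hc : ((2*(a+b+n+1)+2) * ((2*(b+n)+1)+2)) ≤ 4 * (b+1+n+1) * (a+b+2+n+1) := by
      nlinarith
    calc Nat.doubleFactorial (2*(a+b+(n+1)+1)) * Nat.doubleFactorial (2*(b+(n+1))+1) *
        (b+1).factorial * (a+b+2).factorial
        = ((2*(a+b+n+1)+2) * ((2*(b+n)+1)+2)) *
          (Nat.doubleFactorial (2*(a+b+n+1)) * Nat.doubleFactorial (2*(b+n)+1) *
            (b+1).factorial * (a+b+2).factorial) := by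
          rw [h1, h2, Nat.doubleFactorial_add_two, Nat.doubleFactorial_add_two]; ring
      _ ≤ (4 * (b+1+n+1) * (a+b+2+n+1)) *
          (2 ^ (2*n) * (b+1+n).factorial * (a+b+2+n).factorial *
            Nat.doubleFactorial (2*(a+b+1)) * Nat.doubleFactorial (2*b+1)) :=
          Nat.mul_le_mul hc ih
      _ = 2 ^ (2*(n+1)) * (b+1+(n+1)).factorial * (a+b+2+(n+1)).factorial *
          Nat.doubleFactorial (2*(a+b+1)) * Nat.doubleFactorial (2*b+1) := by
          rw [h3, h4, Nat.factorial_succ, Nat.factorial_succ]; ring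

/-- Upper bound on the hypergeometric coefficient in terms of factorials: for even
positive `M`, `N` and any `n`,
`(M+N+2n−2)!! (N+2n−1)!! (N/2)! ((M+N)/2)! ≤ 2^{2n} (N/2+n)! ((M+N)/2+n)! (M+N−2)!! (N−1)!!`. -/
theorem doubleFactorial_upper_bound (M N : ℕ) (hM : 0 < M) (hMe : Even M)
    (hN : 0 < N) (hNe : Even N) (n : ℕ) :
    Nat.doubleFactorial (M + N + 2 * n - 2) * Nat.doubleFactorial (N + 2 * n - 1) *
        (N / 2).factorial * ((M + N) / 2).factorial ≤
      2 ^ (2 * n) * (N / 2 + n).factorial * ((M + N) / 2 + n).factorial *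
        Nat.doubleFactorial (M + N - 2) * Nat.doubleFactorial (N - 1) := by
  obtain ⟨m, rfl⟩ := hMe
  obtain ⟨k, rfl⟩ := hNe
  obtain ⟨a, rfl⟩ : ∃ a, m = a + 1 := ⟨m - 1, by omega⟩
  obtain ⟨b, rfl⟩ : ∃ b, k = b + 1 := ⟨k - 1, by omega⟩
  have e1 : (a+1) + (a+1) + ((b+1)+(b+1)) + 2 * n - 2 = 2*(a+b+n+1) := by omega
  have e2 : (b+1)+(b+1) + 2*n - 1 = 2*(b+n)+1 := by omega
  have e3 : ((b+1)+(b+1)) / 2 = b + 1 := by omega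
  have e4 : ((a+1)+(a+1) + ((b+1)+(b+1))) / 2 = a + b + 2 := by omega
  have e5 : (a+1)+(a+1) + ((b+1)+(b+1)) - 2 = 2*(a+b+1) := by omega
  have e6 : (b+1)+(b+1) - 1 = 2*b+1 := by omega
  rw [e1, e2, e3, e4, e5, e6]
  exact df_aux a b n
end

section
/- Let M be a positive even integer, η ∈ [0,1], and r ∈ ℝ, and suppose (1−η)·M·sinh²(r) < 1. Then 1 − [(1 + ((1−η)/2)(e^{2r} − 1)) · (1 + ((1−η)/2)(e^{−2r} − 1))]^{−M/2} ≤ (1−η)·M·sinh²(r). -/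
lemma one_sub_inv_pow_le_aux (x : ℝ) (hx : 1 ≤ x) (k : ℕ) :
    1 - (x ^ k)⁻¹ ≤ k * (x - 1) := by
  induction k with
  | zero => simp
  | succ n ih =>
      have hx0 : 0 < x := lt_of_lt_of_le one_pos hx
      have hpow : (1:ℝ) ≤ x ^ n := one_le_pow₀ hx
      have hinv : (x ^ n)⁻¹ ≤ 1 := inv_le_one_of_one_le₀ hpow
      have hinvpos : 0 < (x ^ n)⁻¹ := inv_pos.mpr (lt_of_lt_of_le one_pos hpow)
      have hxinv : x⁻¹ ≤ 1 := inv_le_one_of_one_le₀ hx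
      have hxinvpos : 0 < x⁻¹ := inv_pos.mpr hx0
      have hstep : (x ^ n)⁻¹ - (x ^ (n+1))⁻¹ ≤ x - 1 := by
        have : (x ^ (n+1))⁻¹ = (x ^ n)⁻¹ * x⁻¹ := by
          rw [pow_succ, mul_inv]
        rw [this]
        have h1 : (x ^ n)⁻¹ - (x ^ n)⁻¹ * x⁻¹ = (x ^ n)⁻¹ * (1 - x⁻¹) := by ring
        rw [h1]
        have h2 : (x ^ n)⁻¹ * (1 - x⁻¹) ≤ 1 * (1 - x⁻¹) := by
          apply mul_le_mul_of_nonneg_right hinv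
          linarith
        have h3 : (1:ℝ) - x⁻¹ ≤ x - 1 := by
          have : x⁻¹ * x = 1 := inv_mul_cancel₀ (ne_of_gt hx0)
          nlinarith
        linarith
      have := ih
      push_cast
      linarith

/-- Quantitative fidelity bound between ideal and lossy GBS input states: for `M` a
positive even integer, `η ∈ [0,1]`, and `(1−η)·M·sinh² r < 1`,
`1 − [(1 + ((1−η)/2)(e^{2r} − 1))(1 + ((1−η)/2)(e^{−2r} − 1))]^{−M/2} ≤ (1−η)·M·sinh² r`. -/
theorem one_sub_fidelity_le (M : ℕ) (hM : 0 < M) (hMe : Even M) (η r : ℝ)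
    (hη : η ∈ Set.Icc (0 : ℝ) 1) (h : (1 - η) * M * Real.sinh r ^ 2 < 1) :
    1 - (((1 + (1 - η) / 2 * (Real.exp (2 * r) - 1)) *
          (1 + (1 - η) / 2 * (Real.exp (-(2 * r)) - 1))) ^ (M / 2))⁻¹ ≤
      (1 - η) * M * Real.sinh r ^ 2 := by
  obtain ⟨hη0, hη1⟩ := hη
  set ε : ℝ := 1 - η with hε
  have hε0 : 0 ≤ ε := by simp [hε]; linarith
  have hε1 : ε ≤ 1 := by simp [hε]; linarith
  set s : ℝ := Real.sinh r ^ 2 with hs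
  have hs0 : 0 ≤ s := sq_nonneg _
  set P : ℝ := (1 + ε / 2 * (Real.exp (2 * r) - 1)) *
      (1 + ε / 2 * (Real.exp (-(2 * r)) - 1)) with hP
  -- key identity: P = 1 + ε(2-ε) s
  have hPid : P = 1 + ε * (2 - ε) * s := by
    have e1 : Real.exp (2 * r) = Real.exp r ^ 2 := by
      rw [← Real.exp_nat_mul]; ring_nf
    have e2 : Real.exp (-(2 * r)) = Real.exp (-r) ^ 2 := by
      rw [← Real.exp_nat_mul]; ring_nf
    have e3 : Real.exp r * Real.exp (-r) = 1 := by
      rw [← Real.exp_add]; simp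
    have e4 : Real.sinh r = (Real.exp r - Real.exp (-r)) / 2 := by
      rw [Real.sinh_eq]
    rw [hP, hs, e1, e2, e4]
    linear_combination (ε ^ 2 / 4 * (Real.exp r * Real.exp (-r) + 1) + (1 - η ^ 2) / 2) * e3
  have hP1 : 1 ≤ P := by
    rw [hPid]
    nlinarith [mul_nonneg (mul_nonneg hε0 (by linarith : (0:ℝ) ≤ 2 - ε)) hs0]
  have key := one_sub_inv_pow_le_aux P hP1 (M / 2)
  have hMd : ((M / 2 : ℕ) : ℝ) * 2 = (M : ℝ) := by
    obtain ⟨m, hm⟩ := hMe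
    have h2 : M / 2 = m := by omega
    rw [h2, hm]; push_cast; ring
  have hfin : ((M / 2 : ℕ) : ℝ) * (P - 1) ≤ ε * M * s := by
    rw [hPid]
    have h1 : ε * (2 - ε) * s ≤ 2 * (ε * s) := by nlinarith
    have h2 : ((M / 2 : ℕ) : ℝ) ≥ 0 := Nat.cast_nonneg _
    calc ((M / 2 : ℕ) : ℝ) * (1 + ε * (2 - ε) * s - 1)
        = ((M / 2 : ℕ) : ℝ) * (ε * (2 - ε) * s) := by ring
      _ ≤ ((M / 2 : ℕ) : ℝ) * (2 * (ε * s)) := by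
          exact mul_le_mul_of_nonneg_left h1 h2
      _ = (((M / 2 : ℕ) : ℝ) * 2) * (ε * s) := by ring
      _ = ε * M * s := by rw [hMd]; ring
  linarith
end
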